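/- If z ∈ ℕ* is an admissible word, then for all 1 ≤ i ≤ |z| − 1 the inequality z_i − 1 ≤ z_{i+1} holds. -/

import Mathlib

/-- Admissible words on ℕ. -/
def Admissible : List ℕ → Prop
  | [] => True
  | [_] => True
  | a :: b :: t =>
      a - 1 ≤ b ∧ Admissible ((if a - 1 ≤ b ∧ b ≤ a + 1 then max a b + 1 else b) :: t)
termination_by l => l.length

/-! Admissibility is preserved by lowering the first letter, and the letter produced by
a merge step is never below the second letter; hence every suffix of an admissible word is
admissible, and the condition `z₁ - 1 ≤ z₂` checked at the head propagates along the word. -/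

namespace Admissible

theorem of_le_head {t : List ℕ} {b c : ℕ} (hbc : b ≤ c) (h : Admissible (c :: t)) :
    Admissible (b :: t) := by
  induction t generalizing b c with
  | nil => simp [Admissible]
  | cons d t ih =>
    rw [Admissible] at h ⊢
    obtain ⟨hcd, hmerge⟩ := h
    refine ⟨by omega, ih ?_ hmerge⟩
    split_ifs <;> omega

theorem tail {a : ℕ} {t : List ℕ} (h : Admissible (a :: t)) : Admissible t := by
  cases t with
  | nil => simp [Admissible]
  | cons b t =>
    rw [Admissible] at h
    exact of_le_head (by split_ifs <;> omega) h.2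

theorem isChain {z : List ℕ} (h : Admissible z) : z.IsChain (fun a b => a - 1 ≤ b) := by
  induction z with
  | nil => exact .nil
  | cons a t ih =>
    cases t with
    | nil => exact .singleton a
    | cons b t =>
      have hab : a - 1 ≤ b := by
        rw [Admissible] at h
        exact h.1
      exact List.isChain_cons_cons.2 ⟨hab, ih h.tail⟩

end Admissible

theorem admissible_succ_ge_pred_sub_one (z : List ℕ) (h : Admissible z) :
    ∀ (i : ℕ) (_ : 1 ≤ i) (_ : i ≤ z.length - 1),
      (z[i - 1]'(by omega)) - 1 ≤ z[i]'(by omega) := by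
  intro i hi1 hi2
  obtain ⟨j, rfl⟩ : ∃ j, i = j + 1 := ⟨i - 1, by omega⟩
  exact h.isChain.getElem j (by omega)
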